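/- arXiv:2308.14490 — 6 statements merged into one kernel-verified Lean document; each statement's English description precedes it below -/
import Mathlib

section
/- Let A, Z ∈ ℝ^{M×N}, b ∈ ℝ^M, and let 0 < τ₀ < 1. Suppose: (i) there exists x̃ ∈ ℝ^N with ‖b − A x̃‖ ≤ C·τ₀ and ‖x̃‖ ≤ D for constants C, D > 0; (ii) ‖I − A Zᵀ‖ ≤ 2; (iii) ‖Zᵀ‖ ≤ K·τ₀⁻¹ for a constant K > 0. Then there exists x ∈ ℝ^N of the form x = x₂ + Zᵀ(b − A x₂) for some x₂ ∈ ℝ^N, such that ‖A x − b‖ ≤ 2·C·τ₀ and ‖x‖ ≤ D + K·C. -/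
open Matrix
open scoped Matrix.Norms.L2Operator

/-- **Accuracy of the AZ algorithm for the RBF approximation problem**
(Theorem `theo:accuracy` of the paper, in abstract form).
If the least squares problem `A x = b` has a stable fit `xt` with residual `≤ C τ₀` and
coefficient norm `≤ D`, and if `‖I - A Zᵀ‖ ≤ 2` and `‖Zᵀ‖ ≤ K τ₀⁻¹`, then there is an output
`x = x₂ + Zᵀ (b - A x₂)` of the AZ algorithm with `‖A x - b‖ ≤ 2 C τ₀` and `‖x‖ ≤ D + K C`.
Vector norms are Euclidean (via `EuclideanSpace`), matrix norms are ℓ² operator norms. -/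
theorem az_accuracy_rbf (M N : ℕ) (A Z : Matrix (Fin M) (Fin N) ℝ)
    (b : EuclideanSpace ℝ (Fin M)) (τ₀ C D K : ℝ)
    (hτ₀ : 0 < τ₀) (hτ₀' : τ₀ < 1) (hC : 0 < C) (hD : 0 < D) (hK : 0 < K)
    (xt : EuclideanSpace ℝ (Fin N))
    (hfit : ‖b - (EuclideanSpace.equiv (Fin M) ℝ).symm (A.mulVec xt)‖ ≤ C * τ₀)
    (hcoef : ‖xt‖ ≤ D)
    (hIAZ : ‖(1 : Matrix (Fin M) (Fin M) ℝ) - A * Zᵀ‖ ≤ 2)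
    (hZ : ‖Zᵀ‖ ≤ K * τ₀⁻¹) :
    ∃ x x₂ : EuclideanSpace ℝ (Fin N),
      x = x₂ + (EuclideanSpace.equiv (Fin N) ℝ).symm
          (Zᵀ.mulVec (b - (EuclideanSpace.equiv (Fin M) ℝ).symm (A.mulVec x₂))) ∧
      ‖(EuclideanSpace.equiv (Fin M) ℝ).symm (A.mulVec x) - b‖ ≤ 2 * C * τ₀ ∧
      ‖x‖ ≤ D + K * C := by
  classical
  set r : EuclideanSpace ℝ (Fin M) :=
    b - (EuclideanSpace.equiv (Fin M) ℝ).symm (A.mulVec xt) with hr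
  set x : EuclideanSpace ℝ (Fin N) :=
    xt + (EuclideanSpace.equiv (Fin N) ℝ).symm (Zᵀ.mulVec r) with hx
  refine ⟨x, xt, rfl, ?_, ?_⟩
  · have key : (EuclideanSpace.equiv (Fin M) ℝ).symm (A.mulVec x) - b
        = -(EuclideanSpace.equiv (Fin M) ℝ).symm
            (((1 : Matrix (Fin M) (Fin M) ℝ) - A * Zᵀ).mulVec r) := by
      have hAx : A *ᵥ x = A *ᵥ xt + (A * Zᵀ) *ᵥ r := by
        have h0 : (x : Fin N → ℝ) = (EuclideanSpace.equiv (Fin N) ℝ) x := rfl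
        rw [h0, hx, map_add, ContinuousLinearEquiv.apply_symm_apply, Matrix.mulVec_add,
          Matrix.mulVec_mulVec]
        rfl
      apply (EuclideanSpace.equiv (Fin M) ℝ).injective
      rw [map_sub, map_neg]
      simp only [ContinuousLinearEquiv.apply_symm_apply]
      rw [hAx, Matrix.sub_mulVec, Matrix.one_mulVec]
      show A *ᵥ xt + (A * Zᵀ) *ᵥ r - (EuclideanSpace.equiv (Fin M) ℝ) b
        = -(((EuclideanSpace.equiv (Fin M) ℝ) b - A *ᵥ xt) - (A * Zᵀ) *ᵥ r)
      abel
    rw [key, norm_neg]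
    calc ‖(EuclideanSpace.equiv (Fin M) ℝ).symm
          (((1 : Matrix (Fin M) (Fin M) ℝ) - A * Zᵀ).mulVec r)‖
        ≤ ‖(1 : Matrix (Fin M) (Fin M) ℝ) - A * Zᵀ‖ * ‖r‖ :=
          Matrix.l2_opNorm_mulVec _ _
      _ ≤ 2 * (C * τ₀) := by
          apply mul_le_mul hIAZ hfit (norm_nonneg _) (by norm_num)
      _ = 2 * C * τ₀ := by ring
  · have h1 : ‖(EuclideanSpace.equiv (Fin N) ℝ).symm (Zᵀ.mulVec r)‖ ≤ K * τ₀⁻¹ * (C * τ₀) := by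
      calc ‖(EuclideanSpace.equiv (Fin N) ℝ).symm (Zᵀ.mulVec r)‖
          ≤ ‖Zᵀ‖ * ‖r‖ := Matrix.l2_opNorm_mulVec _ _
        _ ≤ K * τ₀⁻¹ * (C * τ₀) :=
            mul_le_mul hZ hfit (norm_nonneg _) (by positivity)
    have h2 : K * τ₀⁻¹ * (C * τ₀) = K * C := by
      field_simp
    calc ‖x‖ ≤ ‖xt‖ + ‖(EuclideanSpace.equiv (Fin N) ℝ).symm (Zᵀ.mulVec r)‖ := norm_add_le _ _
      _ ≤ D + K * C := by rw [← h2]; exact add_le_add hcoef h1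
end

section
/- Let b > 0 and a, t ∈ ℝ. Then | Σ'_{n ∈ ℤ} exp(−b²·(n + a)²) · exp(2πi·n·t) | ≤ (√π / b) · Σ'_{m ∈ ℤ} exp(−π²·(t − m)² / b²). In particular, the modulus of the exponentially weighted sum of samples of any shifted Gaussian is bounded by the corresponding unshifted, real and positive Poisson sum. -/
open Real Complex

lemma summable_gauss_int (c t : ℝ) (hc : 0 < c) :
    Summable (fun n : ℤ => rexp (-c * (t - (n : ℝ)) ^ 2)) := by
  have h : Summable (jacobiTheta₂_term · (((-c * t / π : ℝ)) * Complex.I)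
      (((c / π : ℝ)) * Complex.I)) := by
    rw [summable_jacobiTheta₂_term_iff]
    simp [div_pos hc Real.pi_pos]
  have h2 := summable_norm_iff.mpr h
  simp_rw [norm_jacobiTheta₂_term] at h2
  have h3 := h2.mul_left (rexp (-c * t ^ 2))
  refine h3.congr fun n => ?_
  rw [← Real.exp_add]
  congr 1
  have hπ : (π : ℝ) ≠ 0 := Real.pi_ne_zero
  simp only [Complex.mul_im, Complex.ofReal_re, Complex.I_im, Complex.ofReal_im,
    Complex.I_re, mul_zero, mul_one, zero_mul, add_zero]
  field_simp
  ring

/-- The modulus of the exponentially weighted sum of samples of a shifted Gaussian is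
bounded by the corresponding unshifted, real and positive Poisson sum:
`|∑'_{n ∈ ℤ} exp(-b²(n+a)²) e^{2πint}| ≤ (√π/b) ∑'_{m ∈ ℤ} exp(-π²(t-m)²/b²)`.
In the paper this bounds the entries of the shifted diagonals `d_i` by those of `d₁`. -/
theorem shifted_gaussian_sum_bound (b a t : ℝ) (hb : 0 < b) :
    ‖∑' n : ℤ, (Real.exp (-b ^ 2 * ((n : ℝ) + a) ^ 2) : ℂ) *
        Complex.exp (2 * Real.pi * Complex.I * n * t)‖ ≤
      (Real.sqrt Real.pi / b) *
        ∑' m : ℤ, Real.exp (-Real.pi ^ 2 * (t - (m : ℝ)) ^ 2 / b ^ 2) := by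
  have hb' : (b : ℂ) ≠ 0 := Complex.ofReal_ne_zero.mpr hb.ne'
  have hπ : (π : ℝ) ≠ 0 := Real.pi_ne_zero
  have hπ' : (π : ℂ) ≠ 0 := Complex.ofReal_ne_zero.mpr hπ
  set A : ℂ := ((b ^ 2 / π : ℝ) : ℂ) with hA_def
  set B : ℂ := Complex.I * t - ((b ^ 2 * a / π : ℝ) : ℂ) with hB_def
  have hA : 0 < A.re := by
    simp only [hA_def, Complex.ofReal_re]
    positivity
  -- rewrite each term
  have hterm : ∀ n : ℤ, (Real.exp (-b ^ 2 * ((n : ℝ) + a) ^ 2) : ℂ) *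
      Complex.exp (2 * Real.pi * Complex.I * n * t) =
      Complex.exp (-(b ^ 2 * a ^ 2 : ℝ)) *
        Complex.exp (-π * A * (n : ℂ) ^ 2 + 2 * π * B * (n : ℂ)) := by
    intro n
    rw [Complex.ofReal_exp, ← Complex.exp_add, ← Complex.exp_add]
    congr 1
    simp only [hA_def, hB_def]
    push_cast
    field_simp
    ring
  rw [tsum_congr hterm, tsum_mul_left, Complex.tsum_exp_neg_quadratic hA B]
  -- the absolute value of 1 / A ^ (1/2)
  have hA12 : A ^ (1 / 2 : ℂ) = ((Real.sqrt (b ^ 2 / π) : ℝ) : ℂ) := by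
    have h2 : (1 / 2 : ℂ) = ((1 / 2 : ℝ) : ℂ) := by norm_num
    rw [hA_def, h2, ← Complex.ofReal_cpow (by positivity)]
    norm_cast
    rw [← Real.sqrt_eq_rpow]
  have habs12 : ‖1 / A ^ (1 / 2 : ℂ)‖ = Real.sqrt π / b := by
    rw [hA12, norm_div, norm_one, Complex.norm_real, Real.norm_eq_abs, _root_.abs_of_nonneg (Real.sqrt_nonneg _),
      Real.sqrt_div (sq_nonneg b), Real.sqrt_sq hb.le, one_div_div]
  -- norm of each summand in the transformed sum
  have hnorm : ∀ n : ℤ, ‖Complex.exp (-π / A * ((n : ℂ) + Complex.I * B) ^ 2)‖ =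
      rexp (b ^ 2 * a ^ 2) * rexp (-π ^ 2 * (t - (n : ℝ)) ^ 2 / b ^ 2) := by
    intro n
    have harg : -(π : ℂ) / A * ((n : ℂ) + Complex.I * B) ^ 2 =
        ((-π ^ 2 * (t - (n : ℝ)) ^ 2 / b ^ 2 + b ^ 2 * a ^ 2 : ℝ) : ℂ) +
          ((2 * π * a * ((n : ℝ) - t) : ℝ)) * Complex.I := by
      simp only [hA_def, hB_def]
      push_cast
      field_simp
      ring_nf
      simp only [Complex.I_sq, show (Complex.I : ℂ) ^ 3 = -Complex.I by
        rw [pow_succ, Complex.I_sq]; ring, show (Complex.I : ℂ) ^ 4 = 1 by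
        rw [show (4:ℕ) = 2*2 from rfl, pow_mul, Complex.I_sq]; ring]
      ring
    rw [harg, Complex.norm_exp, ← Real.exp_add]
    congr 1
    simp only [Complex.add_re, Complex.ofReal_re, Complex.mul_re, Complex.I_re,
      Complex.I_im, Complex.ofReal_im, mul_zero, zero_mul, mul_one, sub_zero, zero_sub]
    ring
  -- summability of the norms
  have hsum : Summable (fun n : ℤ => ‖Complex.exp (-π / A * ((n : ℂ) + Complex.I * B) ^ 2)‖) := by
    simp_rw [hnorm]
    apply Summable.mul_left
    have := summable_gauss_int (π ^ 2 / b ^ 2) t (by positivity)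
    refine this.congr fun n => ?_
    congr 1
    ring
  -- assemble
  rw [norm_mul, norm_mul, Complex.norm_exp]
  have hbound := norm_tsum_le_tsum_norm hsum
  rw [tsum_congr hnorm, tsum_mul_left] at hbound
  rw [habs12]
  simp only [Complex.ofReal_neg, Complex.neg_re, Complex.ofReal_re]
  calc rexp (-(b ^ 2 * a ^ 2)) * (Real.sqrt π / b *
          ‖∑' n : ℤ, Complex.exp (-π / A * ((n : ℂ) + Complex.I * B) ^ 2)‖)
      ≤ rexp (-(b ^ 2 * a ^ 2)) * (Real.sqrt π / b * (rexp (b ^ 2 * a ^ 2) *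
          ∑' m : ℤ, rexp (-π ^ 2 * (t - (m : ℝ)) ^ 2 / b ^ 2))) := by
        apply mul_le_mul_of_nonneg_left _ (Real.exp_nonneg _)
        exact mul_le_mul_of_nonneg_left hbound (by positivity)
    _ = Real.sqrt π / b * ∑' m : ℤ, rexp (-π ^ 2 * (t - (m : ℝ)) ^ 2 / b ^ 2) := by
        rw [show rexp (-(b ^ 2 * a ^ 2)) * (Real.sqrt π / b * (rexp (b ^ 2 * a ^ 2) *
            ∑' m : ℤ, rexp (-π ^ 2 * (t - (m : ℝ)) ^ 2 / b ^ 2))) =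
          (rexp (-(b ^ 2 * a ^ 2)) * rexp (b ^ 2 * a ^ 2)) * (Real.sqrt π / b *
            ∑' m : ℤ, rexp (-π ^ 2 * (t - (m : ℝ)) ^ 2 / b ^ 2)) from by ring,
          ← Real.exp_add, neg_add_cancel, Real.exp_zero, one_mul]
end

section
/- Let c > 0. Then for every t ∈ ℝ, Σ'_{m ∈ ℤ} exp(−c·(t − m)²) ≥ Σ'_{m ∈ ℤ} exp(−c·(1/2 − m)²); that is, the 1-periodic function obtained by periodizing the Gaussian exp(−c·x²) attains its minimum at the half-integers, the points in the middle between two consecutive centers. -/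
/-!
Write `F` for the periodized Gaussian. For `c ≥ 4` compare term by term: grouping
`F(1/2 + v) + F(1/2 - v)` by the half-integers `a = 1/2 - m` gives
`e^{-c(a+v)²} + e^{-c(a-v)²} = 2 e^{-c(a²+v²)} cosh(2cav) ≥ 2 e^{-ca²}`,
because `cosh(2cav) ≥ cosh(cv) ≥ e^{cv²}` when `|a| ≥ 1/2` and `|v| ≤ 1/2`; by evenness and
periodicity `F(1/2 - v) = F(1/2 + v)`, and every `t` is of the form `1/2 + v` modulo `1`.

For `c ≤ 4` pass to the dual side by Poisson summation, `F(t) = √(π/c) θ₃(πt, q)` with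
`q = e^{-π²/c} ≤ 1/2`. Then
`θ₃(x, q) - θ₃(π/2, q) = 4 ∑_{n ≥ 1} (-1)^{n+1} q^{n²} sin²(n(x - π/2))`,
and the term `n = 1` dominates all the others since `sin²(ny) ≤ n² sin² y`.
-/

open Real

noncomputable def periodizedGaussian (c t : ℝ) : ℝ := ∑' m : ℤ, exp (-c * (t - m) ^ 2)

/-- Jacobi's `θ₃(x, q)` with nome `q`. -/
noncomputable def theta3 (q x : ℝ) : ℝ := ∑' n : ℤ, q ^ (n ^ 2) * cos (2 * n * x)

section Theta

variable {q : ℝ}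

lemma summable_pow_sq (hq0 : 0 ≤ q) (hq1 : q < 1) : Summable fun n : ℕ => q ^ (n ^ 2) :=
  (summable_geometric_of_lt_one hq0 hq1).of_nonneg_of_le (fun n => by positivity)
    fun n => pow_le_pow_of_le_one hq0 hq1.le (Nat.le_self_pow two_ne_zero n)

lemma summable_zpow_sq (hq0 : 0 ≤ q) (hq1 : q < 1) : Summable fun n : ℤ => q ^ (n ^ 2) :=
  .of_nat_of_neg (by exact_mod_cast summable_pow_sq hq0 hq1)
    (by simpa only [neg_sq] using (by exact_mod_cast summable_pow_sq hq0 hq1 :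
      Summable fun n : ℕ => q ^ ((n : ℤ) ^ 2)))

lemma summable_zpow_sq_mul_exp_mul_I (hq0 : 0 ≤ q) (hq1 : q < 1) (θ : ℤ → ℝ) :
    Summable fun n : ℤ => ((q ^ (n ^ 2) : ℝ) : ℂ) * Complex.exp (θ n * Complex.I) :=
  (summable_zpow_sq hq0 hq1).of_norm_bounded fun n => by
    rw [norm_mul, Complex.norm_exp_ofReal_mul_I, mul_one, Complex.norm_real,
      norm_of_nonneg (zpow_nonneg hq0 _)]

lemma abs_sin_nat_mul_le (n : ℕ) (x : ℝ) : |sin (n * x)| ≤ n * |sin x| := by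
  induction n with
  | zero => simp
  | succ n ih =>
    calc |sin ((n + 1 : ℕ) * x)| = |sin (n * x) * cos x + cos (n * x) * sin x| := by
          rw [Nat.cast_succ, add_mul, one_mul, sin_add]
      _ ≤ |sin (n * x)| + |sin x| := by
          refine (abs_add_le _ _).trans (add_le_add ?_ ?_) <;> rw [abs_mul]
          · exact mul_le_of_le_one_right (abs_nonneg _) (abs_cos_le_one _)
          · exact mul_le_of_le_one_left (abs_nonneg _) (abs_cos_le_one _)
      _ ≤ (n + 1 : ℕ) * |sin x| := by push_cast; linarith

lemma sq_mul_pow_sq_le (hq0 : 0 ≤ q) (hq : q ≤ 1 / 2) (n : ℕ) :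
    ((n + 2 : ℕ) : ℝ) ^ 2 * q ^ ((n + 2) ^ 2) ≤ q / 2 / 2 ^ n := by
  have hpow : q ^ ((n + 2) ^ 2) ≤ q * (q ^ 3) ^ (n + 1) := by
    rw [show (n + 2) ^ 2 = 1 + 3 * (n + 1) + (n + 1) * n by ring, pow_add, pow_add, pow_one,
      pow_mul]
    exact mul_le_of_le_one_right (by positivity) (pow_le_one₀ hq0 (by linarith))
  have hsq : ((n + 2 : ℕ) : ℝ) ^ 2 ≤ 4 ^ (n + 1) := by
    have : n + 2 ≤ 2 ^ (n + 1) := Nat.lt_two_pow_self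
    calc ((n + 2 : ℕ) : ℝ) ^ 2 ≤ ((2 : ℝ) ^ (n + 1)) ^ 2 := by gcongr; exact_mod_cast this
      _ = 4 ^ (n + 1) := by rw [← pow_mul, mul_comm, pow_mul]; norm_num
  have hq3 : 4 * q ^ 3 ≤ 1 / 2 := by nlinarith [pow_le_pow_left₀ hq0 hq 3]
  calc ((n + 2 : ℕ) : ℝ) ^ 2 * q ^ ((n + 2) ^ 2) ≤ 4 ^ (n + 1) * (q * (q ^ 3) ^ (n + 1)) := by
        gcongr
    _ = q * (4 * q ^ 3) ^ (n + 1) := by rw [mul_pow]; ring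
    _ ≤ q * (1 / 2) ^ (n + 1) := by gcongr
    _ = q / 2 / 2 ^ n := by rw [pow_succ, div_pow, one_pow]; ring

lemma tsum_neg_one_pow_mul_pow_sq_mul_sin_sq_nonneg (hq0 : 0 ≤ q) (hq : q ≤ 1 / 2) (y : ℝ) :
    0 ≤ ∑' n : ℕ, (-1) ^ (n + 1) * q ^ (n ^ 2) * sin (n * y) ^ 2 := by
  set f : ℕ → ℝ := fun n => (-1) ^ (n + 1) * q ^ (n ^ 2) * sin (n * y) ^ 2
  have hf : Summable f := (summable_pow_sq hq0 (by linarith)).of_norm_bounded fun n => by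
    simpa [f, abs_mul, abs_of_nonneg hq0] using
      mul_le_of_le_one_right (pow_nonneg hq0 (n ^ 2)) (sin_sq_le_one (n * y))
  have htail (n : ℕ) : -(q * sin y ^ 2 / 2 / 2 ^ n) ≤ f (n + 2) := by
    have hsin : sin ((n + 2 : ℕ) * y) ^ 2 ≤ ((n + 2 : ℕ) : ℝ) ^ 2 * sin y ^ 2 := by
      rw [← sq_abs, ← sq_abs (sin y), ← mul_pow]
      gcongr
      exact abs_sin_nat_mul_le _ _
    have hsign : -(q ^ ((n + 2) ^ 2) * sin ((n + 2 : ℕ) * y) ^ 2) ≤ f (n + 2) := by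
      have hX : 0 ≤ q ^ ((n + 2) ^ 2) * sin ((n + 2 : ℕ) * y) ^ 2 := by positivity
      simp only [f, mul_assoc]
      rcases neg_one_pow_eq_or ℝ (n + 2 + 1) with h | h <;> rw [h] <;> linarith
    calc -(q * sin y ^ 2 / 2 / 2 ^ n)
        ≤ -(((n + 2 : ℕ) : ℝ) ^ 2 * q ^ ((n + 2) ^ 2) * sin y ^ 2) := by
          rw [neg_le_neg_iff, show q * sin y ^ 2 / 2 / 2 ^ n = q / 2 / 2 ^ n * sin y ^ 2 by ring]
          exact mul_le_mul_of_nonneg_right (sq_mul_pow_sq_le hq0 hq n) (sq_nonneg _)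
      _ ≤ -(q ^ ((n + 2) ^ 2) * sin ((n + 2 : ℕ) * y) ^ 2) := by
          rw [neg_le_neg_iff]; nlinarith [pow_nonneg hq0 ((n + 2) ^ 2)]
      _ ≤ f (n + 2) := hsign
  have hlow := Summable.tsum_le_tsum htail (summable_geometric_two' _).neg
    ((summable_nat_add_iff 2).2 hf)
  rw [tsum_neg, tsum_geometric_two'] at hlow
  have hf0 : f 0 = 0 := by simp [f]
  have hf1 : f 1 = q * sin y ^ 2 := by simp [f]
  rw [← hf.sum_add_tsum_nat_add 2, Finset.sum_range_succ, Finset.sum_range_one, hf0, hf1]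
  linarith

lemma cos_two_mul_nat_mul_sub_cos_nat_mul_pi (n : ℕ) (x : ℝ) :
    cos (2 * n * x) - cos (n * π) = 2 * (-1) ^ (n + 1) * sin (n * (x - π / 2)) ^ 2 := by
  rw [show 2 * n * x = 2 * (n * (x - π / 2)) + n * π by ring, cos_add_nat_mul_pi,
    cos_nat_mul_pi, cos_two_mul, cos_sq']
  ring

lemma theta3_sub_theta3_pi_div_two (hq0 : 0 ≤ q) (hq1 : q < 1) (x : ℝ) :
    theta3 q x - theta3 q (π / 2) =
      4 * ∑' n : ℕ, (-1) ^ (n + 1) * q ^ (n ^ 2) * sin (n * (x - π / 2)) ^ 2 := by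
  have hs (z : ℝ) : Summable fun n : ℤ => q ^ (n ^ 2) * cos (2 * n * z) :=
    (summable_zpow_sq hq0 hq1).of_norm_bounded fun n => by
      rw [norm_mul, norm_of_nonneg (zpow_nonneg hq0 _)]
      exact mul_le_of_le_one_right (zpow_nonneg hq0 _) (abs_cos_le_one _)
  rw [theta3, theta3, ← (hs x).tsum_sub (hs _), ← tsum_mul_left]
  have hsym := tsum_nat_add_neg ((hs x).sub (hs (π / 2)))
  simp only [Int.cast_zero, mul_zero, zero_mul, cos_zero, sub_self, add_zero] at hsym
  rw [← hsym]
  refine tsum_congr fun n => ?_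
  simp only [Int.cast_neg, Int.cast_natCast, neg_sq, mul_neg, neg_mul, cos_neg]
  have hcos := cos_two_mul_nat_mul_sub_cos_nat_mul_pi n x
  rw [show 2 * (n : ℝ) * (π / 2) = n * π by ring,
    show (n : ℤ) ^ 2 = (n ^ 2 : ℕ) by push_cast; rfl, zpow_natCast]
  linear_combination 2 * q ^ (n ^ 2) * hcos

lemma theta3_pi_div_two_le (hq0 : 0 ≤ q) (hq : q ≤ 1 / 2) (x : ℝ) :
    theta3 q (π / 2) ≤ theta3 q x := by
  have hdiff := theta3_sub_theta3_pi_div_two hq0 (by linarith) x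
  have hnonneg := tsum_neg_one_pow_mul_pow_sq_mul_sin_sq_nonneg hq0 hq (x - π / 2)
  linarith

end Theta

lemma periodizedGaussian_periodic (c : ℝ) : Function.Periodic (periodizedGaussian c) 1 := by
  intro t
  rw [periodizedGaussian, ← (Equiv.addRight (1 : ℤ)).tsum_eq]
  simp [periodizedGaussian]

lemma periodizedGaussian_neg (c t : ℝ) : periodizedGaussian c (-t) = periodizedGaussian c t := by
  rw [periodizedGaussian, ← (Equiv.neg ℤ).tsum_eq]
  refine tsum_congr fun m => ?_
  rw [Equiv.neg_apply, Int.cast_neg]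
  ring_nf

section Gaussian

variable {c : ℝ}

lemma summable_exp_neg_mul_sub_sq (hc : 0 < c) (t : ℝ) :
    Summable fun m : ℤ => exp (-c * (t - m) ^ 2) := by
  have hτ : 0 < (Complex.I * (c / π : ℝ)).im := by
    rw [Complex.I_mul_im, Complex.ofReal_re]; positivity
  have hθ := (summable_jacobiTheta₂_term_iff (Complex.I * (-(c * t / π) : ℝ)) _).2 hτ
  refine (hθ.norm.mul_left (exp (-c * t ^ 2))).congr fun m => ?_
  rw [norm_jacobiTheta₂_term, Complex.I_mul_im, Complex.I_mul_im, Complex.ofReal_re,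
    Complex.ofReal_re, ← exp_add]
  field_simp
  ring_nf

lemma one_add_sq_div_two_le_cosh (x : ℝ) : 1 + x ^ 2 / 2 ≤ cosh x := by
  simpa [Finset.sum_range_succ] using
    sum_le_hasSum (Finset.range 2) (fun n _ => by rw [pow_mul]; positivity) (hasSum_cosh x)

lemma exp_mul_sq_le_cosh_mul {v : ℝ} (hc : 4 ≤ c) (hv0 : 0 ≤ v) (hv : v ≤ 1 / 2) :
    exp (c * v ^ 2) ≤ cosh (c * v) := by
  have hlog : 0 < log 2 := log_pos one_lt_two
  rcases le_total (c * v) (2 * log 2) with hsmall | hlarge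
  · set y := c * v ^ 2
    have hy0 : 0 ≤ y := by positivity
    have hy2 : exp y ≤ 2 := by
      calc exp y ≤ exp (log 2) := exp_le_exp.2 (by nlinarith)
        _ = 2 := exp_log two_pos
    -- `1 - y ≤ exp (-y)` gives `exp y ≤ 1 + y exp y`
    have hy : exp y ≤ 1 + 2 * y := by
      have h1 : exp y * (1 - y) ≤ 1 := by
        calc exp y * (1 - y) ≤ exp y * exp (-y) := by
              gcongr; linarith [add_one_le_exp (-y)]
          _ = 1 := by rw [← exp_add, add_neg_cancel, exp_zero]
      nlinarith
    calc exp y ≤ 1 + 2 * y := hy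
      _ ≤ 1 + (c * v) ^ 2 / 2 := by nlinarith
      _ ≤ cosh (c * v) := one_add_sq_div_two_le_cosh _
  · calc exp (c * v ^ 2) ≤ exp (c * v - log 2) := exp_le_exp.2 (by nlinarith)
      _ = exp (c * v) / 2 := by rw [exp_sub, exp_log two_pos]
      _ ≤ cosh (c * v) := by rw [cosh_eq]; linarith [exp_pos (-(c * v))]

lemma two_mul_exp_neg_mul_sq_le {a v : ℝ} (hc : 4 ≤ c) (hv : |v| ≤ 1 / 2) (ha : 1 / 2 ≤ |a|) :
    2 * exp (-c * a ^ 2) ≤ exp (-c * (a + v) ^ 2) + exp (-c * (a - v) ^ 2) := by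
  have hcosh : exp (c * v ^ 2) ≤ cosh (2 * c * a * v) :=
    calc exp (c * v ^ 2) = exp (c * |v| ^ 2) := by rw [sq_abs]
      _ ≤ cosh (c * |v|) := exp_mul_sq_le_cosh_mul hc (abs_nonneg v) hv
      _ ≤ cosh (2 * c * a * v) := by
        rw [cosh_le_cosh, abs_mul, abs_mul, abs_mul, abs_mul, abs_abs, abs_two,
          abs_of_nonneg (by linarith : 0 ≤ c)]
        nlinarith [mul_le_mul_of_nonneg_right ha (by positivity : 0 ≤ c * |v|)]
  calc 2 * exp (-c * a ^ 2) = 2 * exp (-c * (a ^ 2 + v ^ 2)) * exp (c * v ^ 2) := by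
        rw [mul_assoc, ← exp_add]; ring_nf
    _ ≤ 2 * exp (-c * (a ^ 2 + v ^ 2)) * cosh (2 * c * a * v) := by gcongr
    _ = exp (-c * (a ^ 2 + v ^ 2)) * exp (-(2 * c * a * v)) +
          exp (-c * (a ^ 2 + v ^ 2)) * exp (2 * c * a * v) := by rw [cosh_eq]; ring
    _ = exp (-c * (a + v) ^ 2) + exp (-c * (a - v) ^ 2) := by
        rw [← exp_add, ← exp_add]; congr 2 <;> ring

lemma periodizedGaussian_half_le_of_four_le (hc : 4 ≤ c) (t : ℝ) :
    periodizedGaussian c (1 / 2) ≤ periodizedGaussian c t := by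
  have hc0 : 0 < c := by linarith
  set v := t - 1 / 2 - round (t - 1 / 2)
  have hv : |v| ≤ 1 / 2 := abs_sub_round _
  have hper := periodizedGaussian_periodic c
  have ht : periodizedGaussian c t = periodizedGaussian c (1 / 2 + v) := by
    rw [show 1 / 2 + v = t - round (t - 1 / 2) * 1 by ring, hper.sub_int_mul_eq]
  have hsym : periodizedGaussian c (1 / 2 - v) = periodizedGaussian c (1 / 2 + v) := by
    rw [← periodizedGaussian_neg, ← hper]
    congr 1
    ring
  have hhalf (m : ℤ) : 1 / 2 ≤ |1 / 2 - (m : ℝ)| := by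
    rcases le_or_gt m 0 with hm | hm
    · have : (m : ℝ) ≤ 0 := by exact_mod_cast hm
      exact le_abs.2 (Or.inl (by linarith))
    · have : (1 : ℝ) ≤ m := by exact_mod_cast hm
      exact le_abs.2 (Or.inr (by linarith))
  suffices 2 * periodizedGaussian c (1 / 2) ≤
      periodizedGaussian c (1 / 2 + v) + periodizedGaussian c (1 / 2 - v) by linarith
  simp only [periodizedGaussian]
  rw [← tsum_mul_left, ← Summable.tsum_add (summable_exp_neg_mul_sub_sq hc0 _)
    (summable_exp_neg_mul_sub_sq hc0 _)]
  refine Summable.tsum_le_tsum (fun m => ?_) ((summable_exp_neg_mul_sub_sq hc0 _).mul_left 2)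
    ((summable_exp_neg_mul_sub_sq hc0 _).add (summable_exp_neg_mul_sub_sq hc0 _))
  rw [show 1 / 2 + v - m = 1 / 2 - m + v by ring, show 1 / 2 - v - m = 1 / 2 - m - v by ring]
  exact two_mul_exp_neg_mul_sq_le hc hv (hhalf m)

lemma periodizedGaussian_eq_sqrt_mul_theta3 (hc : 0 < c) (t : ℝ) :
    periodizedGaussian c t = √(π / c) * theta3 (exp (-(π ^ 2 / c))) (π * t) := by
  set q := exp (-(π ^ 2 / c))
  set E := exp (c * t ^ 2)
  have hc' : (c : ℂ) ≠ 0 := by exact_mod_cast hc.ne'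
  have ha : 0 < ((c / π : ℝ) : ℂ).re := by rw [Complex.ofReal_re]; positivity
  have hpoisson := Complex.tsum_exp_neg_quadratic ha (c * t / π : ℝ)
  have hlhs : ∑' n : ℤ, Complex.exp (-π * (c / π : ℝ) * n ^ 2 + 2 * π * (c * t / π : ℝ) * n) =
      (E * periodizedGaussian c t : ℝ) := by
    rw [periodizedGaussian, ← tsum_mul_left, Complex.ofReal_tsum]
    refine tsum_congr fun n => ?_
    rw [← exp_add, Complex.ofReal_exp]
    congr 1
    push_cast
    field_simp
    ring
  have hrhs (n : ℤ) : Complex.exp (-π / (c / π : ℝ) * (n + Complex.I * (c * t / π : ℝ)) ^ 2) =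
      E * ((q ^ (n ^ 2) : ℝ) * Complex.exp ((-(2 * n * (π * t)) : ℝ) * Complex.I)) := by
    rw [Complex.ofReal_zpow, Complex.ofReal_exp, Complex.ofReal_exp, ← Complex.exp_int_mul,
      ← Complex.exp_add, ← Complex.exp_add]
    congr 1
    push_cast
    field_simp
    ring_nf
    rw [Complex.I_sq]
    ring
  have hconst : 1 / ((c / π : ℝ) : ℂ) ^ (1 / 2 : ℂ) = (√(π / c) : ℝ) := by
    rw [show (1 / 2 : ℂ) = ((1 / 2 : ℝ) : ℂ) by push_cast; rfl,
      ← Complex.ofReal_cpow (by positivity), ← sqrt_eq_rpow, one_div, ← Complex.ofReal_inv,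
      ← sqrt_inv, inv_div]
  have hsum := summable_zpow_sq_mul_exp_mul_I (q := q) (exp_pos _).le
    (exp_lt_one_iff.2 (neg_neg_of_pos (by positivity))) fun n : ℤ => -(2 * n * (π * t))
  simp_rw [hrhs, hconst, tsum_mul_left] at hpoisson
  rw [hlhs] at hpoisson
  have hre := congrArg Complex.re hpoisson
  rw [Complex.ofReal_re, Complex.re_ofReal_mul, Complex.re_ofReal_mul, Complex.re_tsum hsum] at hre
  simp_rw [Complex.re_ofReal_mul, Complex.exp_ofReal_mul_I_re, cos_neg] at hre
  rw [theta3]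
  rw [mul_left_comm] at hre
  exact mul_left_cancel₀ (exp_pos _).ne' hre

lemma periodizedGaussian_half_le_of_le_four (hc : 0 < c) (hc4 : c ≤ 4) (t : ℝ) :
    periodizedGaussian c (1 / 2) ≤ periodizedGaussian c t := by
  have hq : exp (-(π ^ 2 / c)) ≤ 1 / 2 := by
    have h1 : 1 ≤ π ^ 2 / c := by
      rw [le_div_iff₀ hc]; nlinarith [pi_gt_three]
    rw [exp_neg, one_div]
    exact inv_anti₀ two_pos (by linarith [add_one_le_exp (π ^ 2 / c)])
  rw [periodizedGaussian_eq_sqrt_mul_theta3 hc, periodizedGaussian_eq_sqrt_mul_theta3 hc,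
    show π * (1 / 2) = π / 2 by ring]
  exact mul_le_mul_of_nonneg_left (theta3_pi_div_two_le (exp_pos _).le hq _) (sqrt_nonneg _)

end Gaussian

/-- The 1-periodization of the Gaussian `exp(-c x²)` attains its minimum at the
half-integers, the points in the middle between two consecutive centers:
for every `t`, `∑'_{m ∈ ℤ} exp(-c(t-m)²) ≥ ∑'_{m ∈ ℤ} exp(-c(1/2-m)²)`. -/
theorem periodized_gaussian_min_at_half (c : ℝ) (hc : 0 < c) :
    ∀ t : ℝ, ∑' m : ℤ, Real.exp (-c * (1 / 2 - (m : ℝ)) ^ 2) ≤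
      ∑' m : ℤ, Real.exp (-c * (t - (m : ℝ)) ^ 2) := by
  intro t
  rcases le_total c 4 with hc4 | hc4
  · exact periodizedGaussian_half_le_of_le_four hc hc4 t
  · exact periodizedGaussian_half_le_of_four_le hc4 t
end

section
/- For every τ with 0 < τ ≤ 1/2, √2 · τ ≤ Σ'_{m ∈ ℤ} exp( −2·(m − 1/2)² · log(1 + τ⁻²) ) ≤ 4·τ. Equivalently, writing the summand as (1 + τ⁻²)^{−2(m−1/2)²}, the periodized sum at the midpoint is of exact order τ. -/
set_option maxHeartbeats 2000000 in
private lemma midpoint_gaussian_sum_order_tau_aux (τ : ℝ) (hτ : 0 < τ) (hτ' : τ ≤ 1 / 2) :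
    Real.sqrt 2 * τ ≤
        (∑' m : ℤ, Real.exp (-2 * ((m : ℝ) - 1 / 2) ^ 2 * Real.log (1 + τ⁻¹ ^ 2))) ∧
      (∑' m : ℤ, Real.exp (-2 * ((m : ℝ) - 1 / 2) ^ 2 * Real.log (1 + τ⁻¹ ^ 2))) ≤ 4 * τ := by
  have h2 : (2:ℝ) ≤ τ⁻¹ := by
    rw [← one_div, le_div_iff₀ hτ]; linarith
  have hX : (5:ℝ) ≤ 1 + τ⁻¹ ^ 2 := by nlinarith
  have hX0 : (0:ℝ) < 1 + τ⁻¹ ^ 2 := by linarith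
  set L : ℝ := Real.log (1 + τ⁻¹ ^ 2) with hLdef
  have hL : 0 < L := Real.log_pos (by linarith)
  have expL : Real.exp L = 1 + τ⁻¹ ^ 2 := Real.exp_log hX0
  set e : ℝ := Real.exp (-(L/2)) with hedef
  set r : ℝ := Real.exp (-(2*L)) with hrdef
  have he : 0 < e := Real.exp_pos _
  have hr0 : 0 < r := Real.exp_pos _
  have hr1 : r < 1 := by
    rw [hrdef]
    exact Real.exp_lt_one_iff.mpr (by linarith)
  have hinv : τ * τ⁻¹ = 1 := mul_inv_cancel₀ hτ.ne'
  have he2 : e ^ 2 * (1 + τ⁻¹ ^ 2) = 1 := by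
    rw [← expL, hedef, sq, ← Real.exp_add, ← Real.exp_add,
      show -(L/2) + -(L/2) + L = 0 by ring, Real.exp_zero]
  have hr25 : r * (1 + τ⁻¹ ^ 2) ^ 2 = 1 := by
    rw [← expL, hrdef, sq, ← Real.exp_add, ← Real.exp_add,
      show -(2*L) + (L + L) = 0 by ring, Real.exp_zero]
  have hrle : r ≤ 1 / 25 := by
    nlinarith [mul_nonneg hr0.le (mul_nonneg (by linarith : (0:ℝ) ≤ 1 + τ⁻¹ ^ 2 - 5)
      (by linarith : (0:ℝ) ≤ 1 + τ⁻¹ ^ 2 + 5))]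
  clear_value L e r
  have hτ2X : τ ^ 2 * (1 + τ⁻¹ ^ 2) = τ ^ 2 + 1 := by field_simp
  have h4 : 2 * τ ^ 2 ≤ 4 * e ^ 2 := by nlinarith [he2, hτ2X, hX0, sq_nonneg τ]
  have heτ : e ≤ τ := by nlinarith [h4, mul_pos he hτ]
  -- key pointwise identity
  have hkey : ∀ m : ℤ, Real.exp (-2 * ((m : ℝ) - 1 / 2) ^ 2 * L)
      = e * r ^ (m * (m - 1)).toNat := by
    intro m
    have hnn : (0:ℤ) ≤ m * (m - 1) := by
      rcases le_or_gt m 0 with h | h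
      · nlinarith
      · nlinarith
    have hcast : (((m * (m - 1)).toNat : ℝ)) = (m : ℝ) * ((m : ℝ) - 1) := by
      rw [show (((m * (m - 1)).toNat : ℝ)) = (((m * (m - 1)).toNat : ℤ) : ℝ) by push_cast; ring,
        Int.toNat_of_nonneg hnn]
      push_cast; ring
    rw [hedef, hrdef, ← Real.exp_nat_mul, ← Real.exp_add]
    congr 1
    rw [hcast]; ring
  set F : ℤ → ℝ := fun m => e * r ^ (m * (m - 1)).toNat with hFdef
  have htsum_eq : (∑' m : ℤ, Real.exp (-2 * ((m : ℝ) - 1 / 2) ^ 2 * L)) = ∑' m : ℤ, F m :=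
    tsum_congr hkey
  -- summability of the positive-index part, with geometric majorant
  have hg : Summable (fun n : ℕ => e * r ^ (n - 1)) := by
    rw [← summable_nat_add_iff 1]
    simpa using (summable_geometric_of_lt_one hr0.le hr1).mul_left e
  have hgeo : Summable (fun n : ℕ => e * r ^ n) :=
    (summable_geometric_of_lt_one hr0.le hr1).mul_left e
  have hble : ∀ n : ℕ, n - 1 ≤ (((n:ℤ)) * ((n:ℤ) - 1)).toNat := by
    intro n
    have h1 : ((n:ℤ) - 1) ≤ (n:ℤ) * ((n:ℤ) - 1) := by nlinarith [sq_nonneg ((n:ℤ) - 1)]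
    calc n - 1 = ((n:ℤ) - 1).toNat := by omega
      _ ≤ _ := Int.toNat_le_toNat h1
  have hposle : ∀ n : ℕ, F (n : ℤ) ≤ e * r ^ (n - 1) := fun n =>
    mul_le_mul_of_nonneg_left (pow_le_pow_of_le_one hr0.le hr1.le (hble n)) he.le
  have hnegble : ∀ n : ℕ, n ≤ ((-( (n:ℤ) + 1)) * ((-( (n:ℤ) + 1)) - 1)).toNat := by
    intro n
    have h1 : ((n:ℤ)) ≤ (-((n:ℤ) + 1)) * ((-((n:ℤ) + 1)) - 1) := by
      nlinarith [sq_nonneg ((n:ℤ)), Int.ofNat_nonneg n]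
    calc n = ((n:ℤ)).toNat := by omega
      _ ≤ _ := Int.toNat_le_toNat h1
  have hnegle : ∀ n : ℕ, F (-((n:ℤ) + 1)) ≤ e * r ^ n := fun n =>
    mul_le_mul_of_nonneg_left (pow_le_pow_of_le_one hr0.le hr1.le (hnegble n)) he.le
  have hFnonneg : ∀ m : ℤ, 0 ≤ F m := fun m => by positivity
  have hpos : Summable (fun n : ℕ => F (n : ℤ)) :=
    Summable.of_nonneg_of_le (fun n => hFnonneg _) hposle hg
  have hneg : Summable (fun n : ℕ => F (-((n:ℤ) + 1))) :=
    Summable.of_nonneg_of_le (fun n => hFnonneg _) hnegle hgeo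
  have hFsummable : Summable F := Summable.of_nat_of_neg_add_one hpos hneg
  constructor
  · -- lower bound via the terms m = 0 and m = 1
    rw [htsum_eq]
    have hle : F 0 + F 1 ≤ ∑' m : ℤ, F m := by
      have := Summable.sum_le_tsum ({0, 1} : Finset ℤ) (fun m _ => hFnonneg m) hFsummable
      simpa using this
    have hF0 : F 0 = e := by simp [hFdef]
    have hF1 : F 1 = e := by simp [hFdef]
    rw [hF0, hF1] at hle
    refine le_trans ?_ hle
    have hs2 : Real.sqrt 2 ^ 2 = 2 := Real.sq_sqrt (by norm_num)
    have hs0 : 0 ≤ Real.sqrt 2 := Real.sqrt_nonneg 2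
    have hsq : (Real.sqrt 2 * τ) ^ 2 ≤ (e + e) ^ 2 := by
      rw [mul_pow, hs2]; nlinarith [h4]
    calc Real.sqrt 2 * τ = Real.sqrt ((Real.sqrt 2 * τ) ^ 2) :=
          (Real.sqrt_sq (by positivity)).symm
      _ ≤ Real.sqrt ((e + e) ^ 2) := Real.sqrt_le_sqrt hsq
      _ = e + e := Real.sqrt_sq (by linarith)
  · -- upper bound via geometric majorants
    rw [htsum_eq, tsum_of_nat_of_neg_add_one hpos hneg]
    have hbound1 : (∑' n : ℕ, F (n : ℤ)) ≤ e + e * (1 - r)⁻¹ := by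
      calc (∑' n : ℕ, F (n : ℤ)) ≤ ∑' n : ℕ, e * r ^ (n - 1) :=
            Summable.tsum_le_tsum hposle hpos hg
        _ = e + e * (1 - r)⁻¹ := by
            rw [Summable.tsum_eq_zero_add hg]
            simp only [Nat.add_sub_cancel, Nat.zero_sub, pow_zero, mul_one]
            rw [tsum_mul_left, tsum_geometric_of_lt_one hr0.le hr1]
    have hbound2 : (∑' n : ℕ, F (-((n:ℤ) + 1))) ≤ e * (1 - r)⁻¹ := by
      calc (∑' n : ℕ, F (-((n:ℤ) + 1))) ≤ ∑' n : ℕ, e * r ^ n :=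
            Summable.tsum_le_tsum hnegle hneg hgeo
        _ = e * (1 - r)⁻¹ := by rw [tsum_mul_left, tsum_geometric_of_lt_one hr0.le hr1]
    have h1r : 0 < 1 - r := by linarith
    have hinv1r : (1 - r)⁻¹ ≤ 25 / 24 := by
      have h : (24:ℝ) / 25 ≤ 1 - r := by linarith
      have := one_div_le_one_div_of_le (by norm_num : (0:ℝ) < 24 / 25) h
      simpa [one_div] using this
    have hmul : e * (1 - r)⁻¹ ≤ τ * (25 / 24) :=
      mul_le_mul heτ hinv1r (by positivity) hτ.le
    linarith [hbound1, hbound2, hmul, heτ]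

/-- **The periodized Gaussian sum at the midpoint is of exact order `τ`**:
for `0 < τ ≤ 1/2`,
`√2 τ ≤ ∑'_{m ∈ ℤ} exp(-2(m - 1/2)² log(1 + τ⁻²)) ≤ 4τ`.
Equivalently, writing the summand as `(1 + τ⁻²)^(-2(m-1/2)²)`, this quantifies the paper's
estimate `X_s(1/2) = O(τ₀)` for the minimal diagonal entry. -/
theorem midpoint_gaussian_sum_order_tau (τ : ℝ) (hτ : 0 < τ) (hτ' : τ ≤ 1 / 2) :
    Real.sqrt 2 * τ ≤
        (∑' m : ℤ, Real.exp (-2 * ((m : ℝ) - 1 / 2) ^ 2 * Real.log (1 + τ⁻¹ ^ 2))) ∧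
      (∑' m : ℤ, Real.exp (-2 * ((m : ℝ) - 1 / 2) ^ 2 * Real.log (1 + τ⁻¹ ^ 2))) ≤ 4 * τ :=
  midpoint_gaussian_sum_order_tau_aux τ hτ hτ'
end

section
/- Let n, s ≥ 1, let C ∈ ℂ^{n×n} be idempotent (C·C = C), and let d_i, z_i ∈ ℂ^n for i = 1,…,s be such that Σ_{i=1}^s z_i(k)·d_i(k) = 1 for every k. Set D_i = diag(d_i) and Z_i = diag(z_i). Then for every j ∈ {1,…,s}: C·D_j − Σ_{i=1}^s C·D_j·Z_i·C·D_i = − Σ_{i≠j} C·Z_i·(D_j·C·D_i − D_i·C·D_j). -/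
open Matrix

/-!
Since `D_j` commutes with every `Z_i`, each summand `C Z_i (D_j C D_i - D_i C D_j)` equals
`C D_j Z_i C D_i - C Z_i D_i C D_j`, which vanishes for `i = j`. Summing over all `i` and using
`∑ Z_i D_i = 1` together with `C C = C` turns the second part into `C D_j`.
-/

theorem Matrix.sum_diagonal_mul_diagonal_eq_one {n ι : Type*} [Fintype n] [DecidableEq n]
    [Fintype ι] {α : Type*} [Semiring α] {d z : ι → n → α}
    (hzd : ∀ k, ∑ i, z i k * d i k = 1) :
    ∑ i, diagonal (z i) * diagonal (d i) = 1 := by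
  have hsum : ∑ i, diagonal (fun k => z i k * d i k) = diagonal fun k => ∑ i, z i k * d i k :=
    (map_sum (diagonalAddMonoidHom n α) _ _).symm.trans (congrArg diagonal (by ext; simp))
  simp only [diagonal_mul_diagonal, hsum, hzd, diagonal_one]

theorem IsIdempotentElem.mul_sub_sum_eq_neg_sum_erase {R ι : Type*} [Ring R] [Fintype ι]
    [DecidableEq ι] {C : R} (hC : IsIdempotentElem C) {D Z : ι → R} (j : ι)
    (hcomm : ∀ i, Commute (D j) (Z i)) (hZD : ∑ i, Z i * D i = 1) :
    C * D j - ∑ i, C * D j * Z i * C * D i =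
      -∑ i ∈ Finset.univ.erase j, C * Z i * (D j * C * D i - D i * C * D j) := by
  have hterm : ∀ i, C * Z i * (D j * C * D i - D i * C * D j) =
      C * D j * Z i * C * D i - C * Z i * D i * C * D j := fun i => by
    simp only [mul_sub, mul_assoc, (hcomm i).left_comm]
  have hdiag : C * D j * Z j * C * D j - C * Z j * D j * C * D j = 0 := by
    simp only [mul_assoc, (hcomm j).left_comm, sub_self]
  have hunit : ∑ i, C * Z i * D i * C * D j = C * D j := calc
    ∑ i, C * Z i * D i * C * D j = C * (∑ i, Z i * D i) * (C * D j) := by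
      simp only [Finset.mul_sum, Finset.sum_mul, mul_assoc]
    _ = C * D j := by rw [hZD, mul_one, ← mul_assoc, hC.eq]
  simp only [hterm]
  rw [Finset.sum_erase (f := fun i => C * D j * Z i * C * D i - C * Z i * D i * C * D j) _ hdiag,
    Finset.sum_sub_distrib, hunit, neg_sub]

theorem az_rank_key_identity_general (n s : ℕ)
    (C : Matrix (Fin n) (Fin n) ℂ) (hC : C * C = C)
    (d z : Fin s → Fin n → ℂ)
    (hzd : ∀ k, ∑ i, z i k * d i k = 1) :
    ∀ j : Fin s,
      C * Matrix.diagonal (d j) -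
          ∑ i, C * Matrix.diagonal (d j) * Matrix.diagonal (z i) * C * Matrix.diagonal (d i) =
        -∑ i ∈ Finset.univ.erase j,
          C * Matrix.diagonal (z i) *
            (Matrix.diagonal (d j) * C * Matrix.diagonal (d i) -
              Matrix.diagonal (d i) * C * Matrix.diagonal (d j)) := fun j =>
  IsIdempotentElem.mul_sub_sum_eq_neg_sum_erase (D := fun i => diagonal (d i))
    (Z := fun i => diagonal (z i)) hC j (fun _ => commute_diagonal _ _)
    (sum_diagonal_mul_diagonal_eq_one hzd)

/-- **Key algebraic identity in the rank analysis of the AZ residual matrix**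
(from the proof of Theorem `theo:rank` of the paper). If `C` is idempotent, `D_i = diag(d_i)`,
`Z_i = diag(z_i)` and `∑_i z_i(k) d_i(k) = 1` for every `k` (i.e. `∑_i Z_i D_i = I`), then for
every `j`:
`C D_j - ∑_i C D_j Z_i C D_i = -∑_{i ≠ j} C Z_i (D_j C D_i - D_i C D_j)`. -/
theorem az_rank_key_identity (n s : ℕ) (hn : 1 ≤ n) (hs : 1 ≤ s)
    (C : Matrix (Fin n) (Fin n) ℂ) (hC : C * C = C)
    (d z : Fin s → Fin n → ℂ)
    (hzd : ∀ k, ∑ i, z i k * d i k = 1) :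
    ∀ j : Fin s,
      C * Matrix.diagonal (d j) -
          ∑ i, C * Matrix.diagonal (d j) * Matrix.diagonal (z i) * C * Matrix.diagonal (d i) =
        -∑ i ∈ Finset.univ.erase j,
          C * Matrix.diagonal (z i) *
            (Matrix.diagonal (d j) * C * Matrix.diagonal (d i) -
              Matrix.diagonal (d i) * C * Matrix.diagonal (d j)) :=
  az_rank_key_identity_general n s C hC d z hzd
end

section
/- Let A, Z ∈ ℂ^{M×N} and b ∈ ℂ^M. If x₂ ∈ ℂ^N satisfies the step-1 equation of the AZ algorithm exactly, i.e. (I − A·Zᴴ)·(A·x₂) = (I − A·Zᴴ)·b, then the output x := x₂ + Zᴴ·(b − A·x₂) of the AZ algorithm satisfies A·x = b exactly. -/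
open Matrix

/-- **Consistency of the AZ algorithm.** If `x₂` solves the step-1 system
`(I - A Zᴴ) A x₂ = (I - A Zᴴ) b` exactly, then the output
`x = x₂ + Zᴴ (b - A x₂)` of the AZ algorithm satisfies `A x = b` exactly. -/
theorem az_consistency (M N : ℕ) (A Z : Matrix (Fin M) (Fin N) ℂ)
    (b : Fin M → ℂ) (x₂ : Fin N → ℂ)
    (h : ((1 : Matrix (Fin M) (Fin M) ℂ) - A * Zᴴ).mulVec (A.mulVec x₂) =
      ((1 : Matrix (Fin M) (Fin M) ℂ) - A * Zᴴ).mulVec b) :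
    A.mulVec (x₂ + Zᴴ.mulVec (b - A.mulVec x₂)) = b := by
  simp only [sub_mulVec, one_mulVec, ← mulVec_mulVec] at h
  simp only [mulVec_add, ← mulVec_mulVec, mulVec_sub]
  have := sub_eq_sub_iff_sub_eq_sub.mp h
  linear_combination (norm := abel) h
end
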